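/- arXiv:1511.05769 — 2 statements merged into one kernel-verified Lean document; each statement's English description precedes it below -/
import Mathlib

section
/- Let A ∈ M_{n×n}(ℂ) be a nilpotent matrix and let m ≥ 1 be a natural number. Then the ℂ-dimension of the linear span of the set { A^m · B : B ∈ M_{n×n}(ℂ), A·B = B·A } is at most n²/m. -/
/-!
Let `f` be nilpotent on an `n`-dimensional space, `e q = dim (ker f ⊓ range f^q)` and
`W p = f^p · C(f)`, where `C(f)` is the centralizer. Right multiplication by `f` maps `W p` into
`W (p+1)`, and each element of its kernel vanishes on `range f ⊔ ker f^p`, a subspace of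
codimension `e p`, and takes values in `ker f ⊓ range f^p`, of dimension `e p`. Hence
`dim W p ≤ e p ^ 2 + dim W (p+1)`, so `dim W m ≤ ∑_{q ≥ m} e q ^ 2`. Since `e` is antitone and
`∑_{q < d} e q = dim ker f^d ≤ n`, we get `m * e q ≤ q * e q ≤ n` for `q ≥ m`, and therefore
`m * ∑_{q ≥ m} e q ^ 2 ≤ n * ∑_q e q ≤ n ^ 2`.
-/

open Module LinearMap

section

variable {K M N : Type*} [Field K] [AddCommGroup M] [Module K M] [AddCommGroup N] [Module K N]

theorem Submodule.finrank_map_add_finrank_inf_ker [FiniteDimensional K M] (g : M →ₗ[K] N)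
    (p : Submodule K M) : finrank K (p.map g) + finrank K ↥(p ⊓ ker g) = finrank K p := by
  have h := (g.domRestrict p).finrank_range_add_finrank_ker
  rw [range_domRestrict, ker_domRestrict] at h
  rwa [← (Submodule.comapSubtypeEquivOfLe inf_le_left).finrank_eq, Submodule.comap_inf,
    Submodule.comap_subtype_self, top_inf_eq]

theorem finrank_le_of_forall_le_ker_range_le [FiniteDimensional K M] [FiniteDimensional K N]
    {Q : Submodule K M} {E : Submodule K N} (S : Submodule K (M →ₗ[K] N))
    (hS : ∀ u ∈ S, Q ≤ ker u ∧ range u ≤ E) :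
    finrank K S ≤ finrank K (M ⧸ Q) * finrank K E := by
  let Ψ : (M ⧸ Q →ₗ[K] E) →ₗ[K] M →ₗ[K] N := lcomp K N Q.mkQ ∘ₗ compRight K E.subtype
  have hSΨ : S ≤ range Ψ := by
    intro u hu
    obtain ⟨hQ, hE⟩ := hS u hu
    exact ⟨Q.liftQ (u.codRestrict E fun x => hE (mem_range_self u x))
      (by rwa [ker_codRestrict]), by ext; rfl⟩
  calc finrank K S ≤ finrank K (range Ψ) := Submodule.finrank_mono hSΨ
    _ ≤ finrank K (M ⧸ Q →ₗ[K] E) := finrank_range_le Ψ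
    _ = finrank K (M ⧸ Q) * finrank K E := finrank_linearMap K K _ _

end

theorem mul_sum_sq_le_sq_of_antitone {e : ℕ → ℕ} (he : Antitone e) {N : ℕ}
    (hN : ∀ d, ∑ s ∈ Finset.range d, e s ≤ N) (m M : ℕ) :
    m * ∑ j ∈ Finset.Ico m M, e j ^ 2 ≤ N ^ 2 := by
  have hmul : ∀ j ≥ m, m * e j ≤ N := fun j hj =>
    calc m * e j ≤ j * e j := Nat.mul_le_mul_right _ hj
      _ ≤ ∑ s ∈ Finset.range j, e s := by
        simpa using Finset.card_nsmul_le_sum (Finset.range j) e (e j)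
          fun s hs => he (Finset.mem_range.1 hs).le
      _ ≤ N := hN j
  have hsum : ∑ j ∈ Finset.Ico m M, e j ≤ N :=
    (Finset.sum_le_sum_of_subset fun j hj => Finset.mem_range.2 (Finset.mem_Ico.1 hj).2).trans
      (hN M)
  calc m * ∑ j ∈ Finset.Ico m M, e j ^ 2 = ∑ j ∈ Finset.Ico m M, e j * (m * e j) := by
        rw [Finset.mul_sum]; exact Finset.sum_congr rfl fun j _ => by ring
    _ ≤ ∑ j ∈ Finset.Ico m M, e j * N :=
        Finset.sum_le_sum fun j hj => Nat.mul_le_mul_left _ (hmul j (Finset.mem_Ico.1 hj).1)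
    _ = (∑ j ∈ Finset.Ico m M, e j) * N := (Finset.sum_mul _ _ _).symm
    _ ≤ N ^ 2 := by rw [sq]; exact Nat.mul_le_mul_right _ hsum

namespace Module.End

variable {K V : Type*} [Field K] [AddCommGroup V] [Module K V] (f : Module.End K V)

/-- For nilpotent `f`, the number of Jordan blocks of `f` of size greater than `q`. -/
noncomputable def blockCount (q : ℕ) : ℕ := finrank K ↥(ker f ⊓ range (f ^ q))

theorem map_pow_ker_pow_succ (p : ℕ) : (ker (f ^ (p + 1))).map (f ^ p) = ker f ⊓ range (f ^ p) := by
  ext x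
  simp only [Submodule.mem_map, mem_ker, Submodule.mem_inf, mem_range]
  constructor
  · rintro ⟨y, hy, rfl⟩
    exact ⟨by rwa [pow_succ', mul_apply] at hy, y, rfl⟩
  · rintro ⟨hx, y, rfl⟩
    exact ⟨y, by rw [pow_succ', mul_apply, hx], rfl⟩

theorem map_ker_pow_succ (p : ℕ) : (ker (f ^ (p + 1))).map f = range f ⊓ ker (f ^ p) := by
  ext x
  simp only [Submodule.mem_map, mem_ker, Submodule.mem_inf, mem_range]
  constructor
  · rintro ⟨y, hy, rfl⟩
    exact ⟨⟨y, rfl⟩, by rwa [pow_succ, mul_apply] at hy⟩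
  · rintro ⟨⟨y, rfl⟩, hx⟩
    exact ⟨y, by rw [pow_succ, mul_apply, hx], rfl⟩

theorem ker_pow_mono {p q : ℕ} (h : p ≤ q) : ker (f ^ p) ≤ ker (f ^ q) := (iterateKer f).monotone h

noncomputable def powMulCentralizer (p : ℕ) : Submodule K (Module.End K V) :=
  (Subalgebra.centralizer K {f}).toSubmodule.map (LinearMap.mulLeft K (f ^ p))

theorem mem_powMulCentralizer {p : ℕ} {u : Module.End K V} :
    u ∈ f.powMulCentralizer p ↔ ∃ b, Commute f b ∧ f ^ p * b = u := by
  simp [powMulCentralizer, Subalgebra.mem_centralizer_iff, Commute, SemiconjBy]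

theorem powMulCentralizer_eq_bot {p : ℕ} (hp : f ^ p = 0) : f.powMulCentralizer p = ⊥ := by
  simp [powMulCentralizer, hp]

variable [FiniteDimensional K V]

theorem blockCount_antitone : Antitone f.blockCount := fun _ _ h =>
  Submodule.finrank_mono (inf_le_inf_left _ ((iterateRange f).monotone h))

theorem finrank_ker_pow_succ (p : ℕ) :
    finrank K (ker (f ^ (p + 1))) = finrank K (ker (f ^ p)) + f.blockCount p := by
  have h := (ker (f ^ (p + 1))).finrank_map_add_finrank_inf_ker (f ^ p)
  rw [map_pow_ker_pow_succ, inf_eq_right.2 (f.ker_pow_mono p.le_succ)] at h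
  rw [blockCount]
  omega

theorem sum_blockCount_range (d : ℕ) :
    ∑ q ∈ Finset.range d, f.blockCount q = finrank K (ker (f ^ d)) := by
  induction d with
  | zero => rw [pow_zero, one_eq_id, ker_id, finrank_bot, Finset.sum_range_zero]
  | succ d ih => rw [Finset.sum_range_succ, ih, finrank_ker_pow_succ]

theorem sum_blockCount_range_le (d : ℕ) : ∑ q ∈ Finset.range d, f.blockCount q ≤ finrank K V :=
  f.sum_blockCount_range d ▸ Submodule.finrank_le _

theorem finrank_quotient_range_sup_ker_pow (p : ℕ) :
    finrank K (V ⧸ (range f ⊔ ker (f ^ p))) = f.blockCount p := by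
  have hquot := (range f ⊔ ker (f ^ p)).finrank_quotient_add_finrank
  have hsup := Submodule.finrank_sup_add_finrank_inf_eq (range f) (ker (f ^ p))
  have hmap := (ker (f ^ (p + 1))).finrank_map_add_finrank_inf_ker f
  have hle : ker f ≤ ker (f ^ (p + 1)) := by simpa using f.ker_pow_mono (Nat.le_add_left 1 p)
  rw [map_ker_pow_succ, inf_eq_right.2 hle] at hmap
  have hrank := f.finrank_range_add_finrank_ker
  have hker := f.finrank_ker_pow_succ p
  omega

theorem finrank_powMulCentralizer_le_succ (p : ℕ) :
    finrank K (f.powMulCentralizer p) ≤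
      f.blockCount p ^ 2 + finrank K (f.powMulCentralizer (p + 1)) := by
  have hmap :
      (f.powMulCentralizer p).map (LinearMap.mulRight K f) ≤ f.powMulCentralizer (p + 1) := by
    rintro _ ⟨_, hu, rfl⟩
    obtain ⟨b, hb, rfl⟩ := (f.mem_powMulCentralizer).1 hu
    exact (f.mem_powMulCentralizer).2 ⟨b, hb, by simp [mul_assoc, hb.eq, pow_succ]⟩
  have hker : finrank K ↥(f.powMulCentralizer p ⊓ ker (LinearMap.mulRight K f)) ≤
      f.blockCount p ^ 2 := by
    rw [sq]
    nth_rw 1 [← f.finrank_quotient_range_sup_ker_pow p]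
    refine finrank_le_of_forall_le_ker_range_le (E := ker f ⊓ range (f ^ p))
      (f.powMulCentralizer p ⊓ ker (LinearMap.mulRight K f)) fun u hu => ?_
    obtain ⟨hW, huf⟩ := Submodule.mem_inf.1 hu
    obtain ⟨b, hb, rfl⟩ := (f.mem_powMulCentralizer).1 hW
    have hzero : f ^ p * b * f = 0 := huf
    have hcomm : Commute f (f ^ p * b) := ((Commute.refl f).pow_right p).mul_right hb
    refine ⟨sup_le ?_ ?_, le_inf ?_ ?_⟩
    · rintro _ ⟨x, rfl⟩
      rw [mem_ker, ← mul_apply, hzero, LinearMap.zero_apply]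
    · intro x hx
      rw [mem_ker] at hx ⊢
      rw [(hb.pow_left p).eq, mul_apply, hx, map_zero]
    · rintro _ ⟨x, rfl⟩
      rw [mem_ker, ← mul_apply, hcomm.eq, hzero, LinearMap.zero_apply]
    · rw [mul_eq_comp]
      exact range_comp_le_range _ _
  have hrank := (f.powMulCentralizer p).finrank_map_add_finrank_inf_ker (LinearMap.mulRight K f)
  have hmap_le := Submodule.finrank_mono hmap
  omega

theorem finrank_powMulCentralizer_le_sum (p d : ℕ) :
    finrank K (f.powMulCentralizer p) ≤
      ∑ q ∈ Finset.Ico p (p + d), f.blockCount q ^ 2 + finrank K (f.powMulCentralizer (p + d)) := by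
  induction d with
  | zero => simp
  | succ d ih =>
    rw [← add_assoc, Finset.sum_Ico_succ_top (Nat.le_add_right p d), add_assoc]
    exact ih.trans (Nat.add_le_add_left (f.finrank_powMulCentralizer_le_succ (p + d)) _)

theorem mul_finrank_powMulCentralizer_le (hf : IsNilpotent f) (m : ℕ) :
    m * finrank K (f.powMulCentralizer m) ≤ finrank K V ^ 2 := by
  obtain ⟨k, hk⟩ := hf
  have hbound := f.finrank_powMulCentralizer_le_sum m k
  rw [f.powMulCentralizer_eq_bot (p := m + k) (by rw [pow_add, hk, mul_zero]), finrank_bot,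
    add_zero] at hbound
  exact (Nat.mul_le_mul_left m hbound).trans
    (mul_sum_sq_le_sq_of_antitone f.blockCount_antitone f.sum_blockCount_range_le m (m + k))

end Module.End

/-- If `A` is a nilpotent `n × n` complex matrix and `m ≥ 1`, then the span of
`{ A^m * B : B commutes with A }` has dimension at most `n² / m`. -/
theorem dim_span_pow_mul_centralizer_le
    (n : ℕ) (A : Matrix (Fin n) (Fin n) ℂ) (hA : IsNilpotent A)
    (m : ℕ) (hm : 1 ≤ m) :
    (Module.finrank ℂ
        ↥(Submodule.span ℂ {M : Matrix (Fin n) (Fin n) ℂ |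
            ∃ B : Matrix (Fin n) (Fin n) ℂ, A * B = B * A ∧ M = A ^ m * B}) : ℝ) ≤
      (n : ℝ) ^ 2 / (m : ℝ) := by
  set ψ : Matrix (Fin n) (Fin n) ℂ ≃ₐ[ℂ] Module.End ℂ (Fin n → ℂ) := Matrix.toLinAlgEquiv'
  set S := Submodule.span ℂ {M : Matrix (Fin n) (Fin n) ℂ |
    ∃ B : Matrix (Fin n) (Fin n) ℂ, A * B = B * A ∧ M = A ^ m * B}
  have hmap : S.map ψ.toLinearMap ≤ (ψ A).powMulCentralizer m := by
    rw [Submodule.map_span_le]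
    rintro _ ⟨B, hB, rfl⟩
    exact ((ψ A).mem_powMulCentralizer).2
      ⟨ψ B, (show Commute A B from hB).map ψ, by simp⟩
  have hnat : m * finrank ℂ S ≤ n ^ 2 :=
    calc m * finrank ℂ S = m * finrank ℂ (S.map ψ.toLinearMap) := by
          rw [← ψ.toLinearEquiv_toLinearMap, LinearEquiv.finrank_map_eq]
      _ ≤ m * finrank ℂ ((ψ A).powMulCentralizer m) :=
          Nat.mul_le_mul_left m (Submodule.finrank_mono hmap)
      _ ≤ n ^ 2 := by
          simpa using (ψ A).mul_finrank_powMulCentralizer_le (hA.map ψ) m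
  rw [le_div_iff₀ (by exact_mod_cast hm), mul_comm]
  exact_mod_cast hnat
end

section
/- Let A = diag(J_{l₁}, J_{l₂}, ..., J_{l_k}) ∈ M_{n×n}(ℂ) be a block-diagonal nilpotent matrix whose diagonal blocks are nilpotent Jordan blocks of sizes l₁, ..., l_k with l₁ + ··· + l_k = n. Then the centralizer { B ∈ M_{n×n}(ℂ) : A·B = B·A } is a ℂ-subspace of M_{n×n}(ℂ) of dimension Σ_{i=1}^{k} Σ_{j=1}^{k} min(l_i, l_j). -/
/-- The nilpotent Jordan block of size `k`: `1`s on the superdiagonal, `0`s elsewhere. -/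
def jordanBlock (k : ℕ) : Matrix (Fin k) (Fin k) ℂ :=
  Matrix.of fun i j => if (i : ℕ) + 1 = (j : ℕ) then 1 else 0

/-- The centralizer `{B | A * B = B * A}` of a square matrix `A`, as a `ℂ`-subspace. -/
noncomputable def centralizerSubmodule {n : Type*} [Fintype n]
    (A : Matrix n n ℂ) : Submodule ℂ (Matrix n n ℂ) where
  carrier := {B | A * B = B * A}
  add_mem' := by
    intro x y hx hy
    simp only [Set.mem_setOf_eq] at *
    rw [Matrix.mul_add, Matrix.add_mul, hx, hy]
  zero_mem' := by
    simp only [Set.mem_setOf_eq, Matrix.mul_zero, Matrix.zero_mul]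
  smul_mem' := by
    intro c x hx
    simp only [Set.mem_setOf_eq] at *
    rw [Matrix.mul_smul, Matrix.smul_mul, hx]

namespace JordanCentralizer

variable {k : ℕ} {l : Fin k → ℕ}

local notation "A" => Matrix.blockDiagonal' (fun i => jordanBlock (l i))

lemma A_apply (x y : (i : Fin k) × Fin (l i)) :
    (A) x y = if x.1 = y.1 ∧ (x.2 : ℕ) + 1 = (y.2 : ℕ) then 1 else 0 := by
  obtain ⟨i, p⟩ := x; obtain ⟨j, q⟩ := y
  rw [Matrix.blockDiagonal'_apply]
  by_cases h : i = j
  · subst h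
    simp [jordanBlock]
  · simp [h]

lemma mulA_left (B : Matrix ((i : Fin k) × Fin (l i)) ((i : Fin k) × Fin (l i)) ℂ)
    (i j : Fin k) (p : Fin (l i)) (q : Fin (l j)) :
    (A * B) ⟨i, p⟩ ⟨j, q⟩ =
      if h : (p : ℕ) + 1 < l i then B ⟨i, ⟨p + 1, h⟩⟩ ⟨j, q⟩ else 0 := by
  rw [Matrix.mul_apply]
  split
  · next h =>
    rw [Finset.sum_eq_single (⟨i, ⟨p + 1, h⟩⟩ : (i : Fin k) × Fin (l i))]
    · rw [A_apply]; simp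
    · intro z _ hz
      rw [A_apply]
      obtain ⟨z1, z2⟩ := z
      rcases eq_or_ne i z1 with rfl | hne
      · rcases eq_or_ne ((p : ℕ) + 1) (z2 : ℕ) with he | hne2
        · have hz2 : z2 = ⟨(p : ℕ) + 1, h⟩ := Fin.ext he.symm
          exact absurd (congrArg (Sigma.mk i) hz2) hz
        · simp [hne2]
      · simp [hne]
    · simp
  · next h =>
    apply Finset.sum_eq_zero
    intro z _
    rw [A_apply]
    obtain ⟨z1, z2⟩ := z
    rcases eq_or_ne i z1 with rfl | hne
    · have : (p : ℕ) + 1 ≠ (z2 : ℕ) := fun he => h (he ▸ z2.2)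
      simp [this]
    · simp [hne]

lemma mulA_right (B : Matrix ((i : Fin k) × Fin (l i)) ((i : Fin k) × Fin (l i)) ℂ)
    (i j : Fin k) (p : Fin (l i)) (q : Fin (l j)) :
    (B * A) ⟨i, p⟩ ⟨j, q⟩ =
      if 1 ≤ (q : ℕ) then
        B ⟨i, p⟩ ⟨j, ⟨(q : ℕ) - 1, lt_of_le_of_lt (Nat.sub_le _ _) q.2⟩⟩ else 0 := by
  rw [Matrix.mul_apply]
  split
  · next h =>
    rw [Finset.sum_eq_single (⟨j, ⟨(q : ℕ) - 1, lt_of_le_of_lt (Nat.sub_le _ _) q.2⟩⟩ :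
        (i : Fin k) × Fin (l i))]
    · rw [A_apply]; simp; omega
    · intro z _ hz
      rw [A_apply]
      obtain ⟨z1, z2⟩ := z
      rcases eq_or_ne z1 j with rfl | hne
      · rcases eq_or_ne ((z2 : ℕ) + 1) (q : ℕ) with he | hne2
        · have hz2 : z2 = ⟨(q : ℕ) - 1, lt_of_le_of_lt (Nat.sub_le _ _) q.2⟩ :=
            Fin.ext (by simp; omega)
          exact absurd (congrArg (Sigma.mk z1) hz2) hz
        · simp [hne2]
      · simp [hne]
    · simp
  · next h =>
    apply Finset.sum_eq_zero
    intro z _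
    rw [A_apply]
    obtain ⟨z1, z2⟩ := z
    rcases eq_or_ne z1 j with rfl | hne
    · have : (z2 : ℕ) + 1 ≠ (q : ℕ) := by omega
      simp [this]
    · simp [hne]

lemma comm_rec {B : Matrix ((i : Fin k) × Fin (l i)) ((i : Fin k) × Fin (l i)) ℂ}
    (hB : A * B = B * A) (i j : Fin k) (p : Fin (l i)) (q : Fin (l j)) :
    (if h : (p : ℕ) + 1 < l i then B ⟨i, ⟨p + 1, h⟩⟩ ⟨j, q⟩ else 0) =
      (if 1 ≤ (q : ℕ) then
        B ⟨i, p⟩ ⟨j, ⟨(q : ℕ) - 1, lt_of_le_of_lt (Nat.sub_le _ _) q.2⟩⟩ else 0) := by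
  have := congrFun (congrFun hB ⟨i, p⟩) ⟨j, q⟩
  rwa [mulA_left, mulA_right] at this

lemma vanish_low {B : Matrix ((i : Fin k) × Fin (l i)) ((i : Fin k) × Fin (l i)) ℂ}
    (hB : A * B = B * A) (i j : Fin k) (p q : ℕ) (hp : p < l i) (hq : q < l j)
    (h : q < p) : B ⟨i, ⟨p, hp⟩⟩ ⟨j, ⟨q, hq⟩⟩ = 0 := by
  induction p generalizing q with
  | zero => omega
  | succ p ih =>
    have hp' : p < l i := by omega
    have := comm_rec hB i j ⟨p, hp'⟩ ⟨q, hq⟩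
    simp only [Fin.val_mk] at this
    rw [dif_pos (show p + 1 < l i from hp)] at this
    rcases Nat.eq_zero_or_pos q with rfl | hq1
    · simpa using this
    · rw [if_pos (show 1 ≤ q from hq1)] at this
      rw [this]
      exact ih (q - 1) hp' (by omega) (by omega)

lemma shift {B : Matrix ((i : Fin k) × Fin (l i)) ((i : Fin k) × Fin (l i)) ℂ}
    (hB : A * B = B * A) (i j : Fin k) (p q : ℕ) (hp : p < l i) (hq : q < l j)
    (h : p ≤ q) :
    B ⟨i, ⟨p, hp⟩⟩ ⟨j, ⟨q, hq⟩⟩ =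
      B ⟨i, ⟨0, by omega⟩⟩ ⟨j, ⟨q - p, by omega⟩⟩ := by
  induction p generalizing q with
  | zero => simp
  | succ p ih =>
    have hp' : p < l i := by omega
    have := comm_rec hB i j ⟨p, hp'⟩ ⟨q, hq⟩
    simp only [Fin.val_mk] at this
    rw [dif_pos (show p + 1 < l i from hp), if_pos (show 1 ≤ q by omega)] at this
    rw [this, ih (q - 1) (by omega) (by omega) (by omega)]
    congr 1
    exact congrArg (Sigma.mk j) (Fin.ext (by simp only [Fin.val_mk]; omega))

lemma vanish_top {B : Matrix ((i : Fin k) × Fin (l i)) ((i : Fin k) × Fin (l i)) ℂ}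
    (hB : A * B = B * A) (i j : Fin k) (d : ℕ) (hd : d < l j) (h0 : 0 < l i)
    (h : d < l j - min (l i) (l j)) : B ⟨i, ⟨0, h0⟩⟩ ⟨j, ⟨d, hd⟩⟩ = 0 := by
  have hmin : min (l i) (l j) ≤ l i := Nat.min_le_left _ _
  have e0 : (l j - min (l i) (l j)) + min (l i) (l j) = l j :=
    Nat.sub_add_cancel (Nat.min_le_right _ _)
  have hij : l i < l j := by omega
  have hq : d + l i < l j := by omega
  have e1 : (⟨i, ⟨0, h0⟩⟩ : (i : Fin k) × Fin (l i)) = ⟨i, ⟨0, by omega⟩⟩ := rfl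
  have e2 : (⟨j, ⟨d, hd⟩⟩ : (i : Fin k) × Fin (l i)) =
      ⟨j, ⟨d + l i - 1 - (l i - 1), by omega⟩⟩ :=
    congrArg (Sigma.mk j) (Fin.ext (by simp only [Fin.val_mk]; omega))
  rw [e1, e2, ← shift hB i j (l i - 1) (d + l i - 1) (by omega) (by omega) (by omega)]
  have h4 := comm_rec hB i j ⟨l i - 1, by omega⟩ ⟨d + l i, hq⟩
  simp only [Fin.val_mk] at h4
  rw [dif_neg (by omega), if_pos (by omega)] at h4
  exact h4.symm

/-- The entrywise inverse: reconstruct a centralizer element from diagonal parameters. -/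
def psi (c : (i : Fin k) → (j : Fin k) → Fin (min (l i) (l j)) → ℂ) :
    Matrix ((i : Fin k) × Fin (l i)) ((i : Fin k) × Fin (l i)) ℂ :=
  fun x y =>
    if h : (x.2 : ℕ) + (l y.1 - min (l x.1) (l y.1)) ≤ (y.2 : ℕ) then
      c x.1 y.1 ⟨(y.2 : ℕ) - (x.2 : ℕ) - (l y.1 - min (l x.1) (l y.1)),
        by have := y.2.2; have := Nat.min_le_right (l x.1) (l y.1); omega⟩
    else 0

lemma psi_apply (c : (i : Fin k) → (j : Fin k) → Fin (min (l i) (l j)) → ℂ)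
    (i j : Fin k) (p q : ℕ) (hp : p < l i) (hq : q < l j) :
    psi c ⟨i, ⟨p, hp⟩⟩ ⟨j, ⟨q, hq⟩⟩ =
      if h : p + (l j - min (l i) (l j)) ≤ q then
        c i j ⟨q - p - (l j - min (l i) (l j)),
          by have := Nat.min_le_right (l i) (l j); omega⟩
      else 0 := rfl

lemma psi_mem (c : (i : Fin k) → (j : Fin k) → Fin (min (l i) (l j)) → ℂ) :
    (A) * psi c = psi c * (A) := by
  ext ⟨i, p⟩ ⟨j, q⟩
  obtain ⟨p, hp⟩ := p
  obtain ⟨q, hq⟩ := q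
  rw [mulA_left, mulA_right]
  simp only [Fin.val_mk]
  have e0 : (l j - min (l i) (l j)) + min (l i) (l j) = l j :=
    Nat.sub_add_cancel (Nat.min_le_right _ _)
  have e2 : min (l i) (l j) ≤ l i := Nat.min_le_left _ _
  by_cases h1 : p + 1 < l i
  · rw [dif_pos h1, psi_apply]
    by_cases hq1 : 1 ≤ q
    · rw [if_pos hq1, psi_apply]
      by_cases h3 : p + 1 + (l j - min (l i) (l j)) ≤ q
      · rw [dif_pos h3, dif_pos (by omega)]
        exact congrArg _ (Fin.ext (by simp only [Fin.val_mk]; omega))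
      · rw [dif_neg h3, dif_neg (by omega)]
    · rw [if_neg hq1]
      exact dif_neg (by omega)
  · rw [dif_neg h1]
    by_cases hq1 : 1 ≤ q
    · rw [if_pos hq1, psi_apply]
      symm
      exact dif_neg (by omega)
    · rw [if_neg hq1]

/-- Read off the diagonal parameters of a matrix. -/
def phi (hl : ∀ i, 1 ≤ l i)
    (B : Matrix ((i : Fin k) × Fin (l i)) ((i : Fin k) × Fin (l i)) ℂ) :
    (i : Fin k) → (j : Fin k) → Fin (min (l i) (l j)) → ℂ :=
  fun i j m => B ⟨i, ⟨0, hl i⟩⟩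
    ⟨j, ⟨l j - min (l i) (l j) + (m : ℕ),
      by have := m.2; have := Nat.min_le_right (l i) (l j); omega⟩⟩

lemma phi_apply (hl : ∀ i, 1 ≤ l i)
    (B : Matrix ((i : Fin k) × Fin (l i)) ((i : Fin k) × Fin (l i)) ℂ)
    (i j : Fin k) (m : Fin (min (l i) (l j))) :
    phi hl B i j m = B ⟨i, ⟨0, hl i⟩⟩
      ⟨j, ⟨l j - min (l i) (l j) + (m : ℕ),
        by have := m.2; have := Nat.min_le_right (l i) (l j); omega⟩⟩ := rfl

end JordanCentralizer

/-- The centralizer of the block-diagonal nilpotent matrix `diag(J_{l₁}, ..., J_{l_k})`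
(with nilpotent Jordan blocks of sizes `l 1, ..., l k` on the diagonal) has dimension
`Σᵢ Σⱼ min (l i) (l j)`. -/
theorem finrank_centralizer_blockDiagonal_jordan
    (k : ℕ) (l : Fin k → ℕ) (hl : ∀ i, 1 ≤ l i) :
    Module.finrank ℂ
        ↥(centralizerSubmodule (Matrix.blockDiagonal' fun i => jordanBlock (l i))) =
      ∑ i, ∑ j, min (l i) (l j) := by
  classical
  let e : ↥(centralizerSubmodule (Matrix.blockDiagonal' fun i => jordanBlock (l i))) ≃ₗ[ℂ]
      ((i : Fin k) → (j : Fin k) → Fin (min (l i) (l j)) → ℂ) :=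
    { toFun := fun B => JordanCentralizer.phi hl B.1
      map_add' := fun B C => rfl
      map_smul' := fun r B => rfl
      invFun := fun c => ⟨JordanCentralizer.psi c, JordanCentralizer.psi_mem c⟩
      left_inv := by
        intro B
        apply Subtype.ext
        have hB : Matrix.blockDiagonal' (fun i => jordanBlock (l i)) * (B : Matrix _ _ ℂ) =
            (B : Matrix _ _ ℂ) * Matrix.blockDiagonal' (fun i => jordanBlock (l i)) := B.2
        ext ⟨i, p⟩ ⟨j, q⟩
        obtain ⟨p, hp⟩ := p
        obtain ⟨q, hq⟩ := q
        have e0 : (l j - min (l i) (l j)) + min (l i) (l j) = l j :=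
          Nat.sub_add_cancel (Nat.min_le_right _ _)
        have e2 : min (l i) (l j) ≤ l i := Nat.min_le_left _ _
        show JordanCentralizer.psi _ _ _ = _
        rw [JordanCentralizer.psi_apply]
        split
        · next h =>
          show JordanCentralizer.phi hl B.1 i j _ = _
          rw [JordanCentralizer.phi_apply,
            JordanCentralizer.shift hB i j p q hp hq (by omega)]
          exact congrArg _ (congrArg (Sigma.mk j)
            (Fin.ext (by simp only [Fin.val_mk]; omega)))
        · next h =>
          by_cases hpq : q < p
          · exact (JordanCentralizer.vanish_low hB i j p q hp hq hpq).symm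
          · rw [JordanCentralizer.shift hB i j p q hp hq (by omega)]
            exact (JordanCentralizer.vanish_top hB i j (q - p) (by omega) (by omega)
              (by omega)).symm
      right_inv := by
        intro c
        funext i j m
        show JordanCentralizer.phi hl (JordanCentralizer.psi c) i j m = c i j m
        rw [JordanCentralizer.phi_apply, JordanCentralizer.psi_apply, dif_pos (by omega)]
        exact congrArg _ (Fin.ext (by simp only [Fin.val_mk]; omega)) }
  rw [e.finrank_eq, Module.finrank_pi_fintype ℂ]
  refine Finset.sum_congr rfl fun i _ => ?_
  rw [Module.finrank_pi_fintype ℂ]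
  refine Finset.sum_congr rfl fun j _ => ?_
  rw [Module.finrank_pi ℂ, Fintype.card_fin]
end
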